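/- arXiv:2304.07332 — 3 statements merged into one kernel-verified Lean document; each statement's English description precedes it below -/
import Mathlib

section
/- Let V be a ℚ-vector space with alternating bilinear form ω and P ∈ End(V) preserving ω with I - P invertible. Define f(z) = -(1/2)·ω((I - P)⁻¹ z, z). Then for all x, y ∈ V: f(x + y) - f(P(x) + y) = (1/2)·ω(y, P(x)) - (1/2)·ω(x, y). -/
theorem renormalization_identity (V : Type*) [AddCommGroup V] [Module ℚ V]
    (ω : V →ₗ[ℚ] V →ₗ[ℚ] ℚ)
    (halt : ∀ x, ω x x = 0)
    (P : Module.End ℚ V) (hP : ∀ a b, ω (P a) (P b) = ω a b)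
    (h1 : IsUnit (1 - P)) :
    ∀ x y : V,
      (-(1 / 2 : ℚ) * ω (Ring.inverse (1 - P) (x + y)) (x + y)) -
          (-(1 / 2 : ℚ) * ω (Ring.inverse (1 - P) (P x + y)) (P x + y)) =
        (1 / 2 : ℚ) * ω y (P x) - (1 / 2 : ℚ) * ω x y := by
  have skew : ∀ a b, ω a b = - ω b a := by
    intro a b
    have h := halt (a + b)
    simp only [map_add, LinearMap.add_apply, halt] at h
    linarith
  set Q := Ring.inverse (1 - P) with hQ
  have hQ1 : ∀ z, (1 - P) (Q z) = z := by
    intro z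
    rw [← Module.End.mul_apply, Ring.mul_inverse_cancel _ h1, Module.End.one_apply]
  have hQ2 : ∀ z, Q ((1 - P) z) = z := by
    intro z
    rw [← Module.End.mul_apply, Ring.inverse_mul_cancel _ h1, Module.End.one_apply]
  have key : ∀ a b, ω ((1 - P) a) b + ω a ((1 - P) b) = ω ((1 - P) a) ((1 - P) b) := by
    intro a b
    simp only [LinearMap.sub_apply, Module.End.one_apply, map_sub, LinearMap.sub_apply, hP]
    ring
  have sym : ∀ u v, ω (Q u) ((1 - P) v) = ω u ((1 - P) v) - ω u v := by
    intro u v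
    have h := key (Q u) v
    rw [hQ1] at h
    linarith
  intro x y
  have hsub : P x + y = (x + y) - (1 - P) x := by
    simp only [LinearMap.sub_apply, Module.End.one_apply]
    abel
  have e : Q (x + y - (1 - P) x) = Q (x + y) - x := by rw [map_sub, hQ2]
  rw [hsub, e]
  have h1' := sym (x + y) x
  have e1 : (1 - P) x = x - P x := by
    simp [LinearMap.sub_apply]
  rw [e1] at h1' ⊢
  simp only [map_sub, map_add, LinearMap.sub_apply, LinearMap.add_apply, halt] at h1' ⊢
  have s1 := skew x y
  have s2 := skew x (P x)
  have s3 := skew y (P x)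
  have s4 := halt x
  linarith [h1']
end

section
/- Let P ∈ End(V) preserve a bilinear form ω with I - P invertible. Then ω((I - P)⁻¹ P(x), P(x)) = ω((I - P)⁻¹ x, x) for all x ∈ V. -/
theorem omega_inverse_apply_map (F : Type*) [Field F] [CharZero F]
    (V : Type*) [AddCommGroup V] [Module F V]
    (ω : V →ₗ[F] V →ₗ[F] F)
    (P : Module.End F V) (hP : ∀ a b, ω (P a) (P b) = ω a b)
    (h1 : IsUnit (1 - P)) (x : V) :
    ω (Ring.inverse (1 - P) (P x)) (P x) = ω (Ring.inverse (1 - P) x) x := by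
  set i := Ring.inverse (1 - P) with hi
  have h2 : (1 - P) * i = 1 := Ring.mul_inverse_cancel _ h1
  have h3 : i * (1 - P) = 1 := Ring.inverse_mul_cancel _ h1
  have hcomm : (1 - P) * P = P * (1 - P) := by noncomm_ring
  have hc : i * P = P * i := by
    calc i * P = i * P * ((1 - P) * i) := by rw [h2, mul_one]
      _ = i * ((1 - P) * P) * i := by rw [hcomm]; noncomm_ring
      _ = (i * (1 - P)) * (P * i) := by noncomm_ring
      _ = P * i := by rw [h3, one_mul]
  have key : i (P x) = P (i x) := by
    have := congrArg (fun f : Module.End F V => f x) hc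
    simpa [Module.End.mul_apply] using this
  rw [key, hP]
end

section
/- Let φ : ℤ² → ℤ² be a ℤ-linear map, K = ker(φ), and K^⊥ = {x ∈ ℤ² : ω(x,k) = 0 for all k ∈ K} where ω is the standard symplectic form on ℤ². If φ is induced by I - P for P ∈ SL₂(ℤ), then Im(φ) ⊆ K^⊥ and Im(φ) has finite index in K^⊥, and the quotient K^⊥/Im(φ) is isomorphic to the torsion subgroup of coker(φ : ℤ² → ℤ²). -/
/-- The standard symplectic form on `ℤ²`. -/
def omegaZ (x y : Fin 2 → ℤ) : ℤ := x 0 * y 1 - x 1 * y 0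

/-- The orthogonal complement of the kernel of `φ` with respect to the standard
symplectic form on `ℤ²`. -/
def Kperp (φ : (Fin 2 → ℤ) →ₗ[ℤ] (Fin 2 → ℤ)) : Submodule ℤ (Fin 2 → ℤ) where
  carrier := {x | ∀ k ∈ LinearMap.ker φ, omegaZ x k = 0}
  add_mem' := by
    intro a b ha hb k hk
    have h1 := ha k hk
    have h2 := hb k hk
    simp only [omegaZ, Pi.add_apply] at *
    linarith [h1, h2, mul_add (k 1) (a 0) (b 0)]
  zero_mem' := by
    intro k hk
    simp [omegaZ]
  smul_mem' := by
    intro c a ha k hk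
    have h1 := ha k hk
    simp only [omegaZ, Pi.smul_apply, smul_eq_mul] at *
    linear_combination c * h1

private lemma mulVecLin_fin2 (A : Matrix (Fin 2) (Fin 2) ℤ) (x : Fin 2 → ℤ) (i : Fin 2) :
    A.mulVecLin x i = A i 0 * x 0 + A i 1 * x 1 := by
  simp [Matrix.mulVecLin_apply, Matrix.mulVec, dotProduct, Fin.sum_univ_two]

private lemma funext_fin2 {u v : Fin 2 → ℤ} (h0 : u 0 = v 0) (h1 : u 1 = v 1) : u = v := by
  funext i
  fin_cases i
  exacts [h0, h1]

private lemma range_le_Kperp_aux (P : Matrix.SpecialLinearGroup (Fin 2) ℤ) :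
    LinearMap.range (Matrix.mulVecLin
      ((1 : Matrix (Fin 2) (Fin 2) ℤ) - (P : Matrix (Fin 2) (Fin 2) ℤ))) ≤
    Kperp (Matrix.mulVecLin
      ((1 : Matrix (Fin 2) (Fin 2) ℤ) - (P : Matrix (Fin 2) (Fin 2) ℤ))) := by
  set A := (1 : Matrix (Fin 2) (Fin 2) ℤ) - (P : Matrix (Fin 2) (Fin 2) ℤ) with hA
  rintro _ ⟨x, rfl⟩ k hk
  rw [LinearMap.mem_ker] at hk
  have e0 := congrFun hk 0
  have e1 := congrFun hk 1
  rw [mulVecLin_fin2] at e0 e1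
  have hdet : (P : Matrix (Fin 2) (Fin 2) ℤ) 0 0 * (P : Matrix (Fin 2) (Fin 2) ℤ) 1 1
      - (P : Matrix (Fin 2) (Fin 2) ℤ) 0 1 * (P : Matrix (Fin 2) (Fin 2) ℤ) 1 0 = 1 := by
    have := P.2
    rwa [Matrix.det_fin_two] at this
  have hA00 : A 0 0 = 1 - (P : Matrix (Fin 2) (Fin 2) ℤ) 0 0 := by simp [hA, Matrix.one_apply]
  have hA01 : A 0 1 = -(P : Matrix (Fin 2) (Fin 2) ℤ) 0 1 := by simp [hA, Matrix.one_apply]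
  have hA10 : A 1 0 = -(P : Matrix (Fin 2) (Fin 2) ℤ) 1 0 := by simp [hA, Matrix.one_apply]
  have hA11 : A 1 1 = 1 - (P : Matrix (Fin 2) (Fin 2) ℤ) 1 1 := by simp [hA, Matrix.one_apply]
  simp only [omegaZ, mulVecLin_fin2, Pi.zero_apply, hA00, hA01, hA10, hA11] at e0 e1 ⊢
  set p00 := (P : Matrix (Fin 2) (Fin 2) ℤ) 0 0
  set p01 := (P : Matrix (Fin 2) (Fin 2) ℤ) 0 1
  set p10 := (P : Matrix (Fin 2) (Fin 2) ℤ) 1 0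
  set p11 := (P : Matrix (Fin 2) (Fin 2) ℤ) 1 1
  linear_combination (x 1 * k 0 - x 0 * k 1) * hdet + (p10 * x 0 + p11 * x 1) * e0
    - (p00 * x 0 + p01 * x 1) * e1

private lemma sat_aux (A : Matrix (Fin 2) (Fin 2) ℤ)
    (hrel : A 0 0 + A 1 1 = A 0 0 * A 1 1 - A 0 1 * A 1 0)
    (x : Fin 2 → ℤ) (hx : x ∈ Kperp A.mulVecLin) :
    ∃ n : ℤ, n ≠ 0 ∧ n • x ∈ LinearMap.range A.mulVecLin := by
  by_cases hdet : A 0 0 * A 1 1 - A 0 1 * A 1 0 ≠ 0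
  · refine ⟨A 0 0 * A 1 1 - A 0 1 * A 1 0, hdet,
      ![A 1 1 * x 0 - A 0 1 * x 1, -(A 1 0) * x 0 + A 0 0 * x 1], funext_fin2 ?_ ?_⟩ <;>
      simp only [mulVecLin_fin2, Matrix.cons_val_zero, Matrix.cons_val_one, Matrix.head_cons,
        Pi.smul_apply, smul_eq_mul] <;> ring
  · push_neg at hdet
    have htr : A 0 0 + A 1 1 = 0 := by rw [hrel, hdet]
    have hk1 : ![A 0 0, A 1 0] ∈ LinearMap.ker A.mulVecLin := by
      rw [LinearMap.mem_ker]
      refine funext_fin2 ?_ ?_ <;>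
        simp only [mulVecLin_fin2, Matrix.cons_val_zero, Matrix.cons_val_one, Matrix.head_cons,
          Pi.zero_apply]
      · linear_combination A 0 0 * htr - hdet
      · linear_combination A 1 0 * htr
    have hk2 : ![A 0 1, A 1 1] ∈ LinearMap.ker A.mulVecLin := by
      rw [LinearMap.mem_ker]
      refine funext_fin2 ?_ ?_ <;>
        simp only [mulVecLin_fin2, Matrix.cons_val_zero, Matrix.cons_val_one, Matrix.head_cons,
          Pi.zero_apply]
      · linear_combination A 0 1 * htr
      · linear_combination A 1 1 * htr - hdet
    have H1 := hx _ hk1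
    have H2 := hx _ hk2
    simp only [omegaZ, Matrix.cons_val_zero, Matrix.cons_val_one, Matrix.head_cons] at H1 H2
    by_cases ha : A 0 0 ≠ 0
    · refine ⟨A 0 0, ha, ![x 0, 0], funext_fin2 ?_ ?_⟩ <;>
        simp only [mulVecLin_fin2, Matrix.cons_val_zero, Matrix.cons_val_one, Matrix.head_cons,
          Pi.smul_apply, smul_eq_mul]
      · ring
      · linear_combination H1
    · push_neg at ha
      by_cases hc : A 1 0 ≠ 0
      · refine ⟨A 1 0, hc, ![x 1, 0], funext_fin2 ?_ ?_⟩ <;>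
          simp only [mulVecLin_fin2, Matrix.cons_val_zero, Matrix.cons_val_one, Matrix.head_cons,
            Pi.smul_apply, smul_eq_mul]
        · linear_combination -H1
        · ring
      · push_neg at hc
        by_cases hb : A 0 1 ≠ 0
        · refine ⟨A 0 1, hb, ![0, x 0], funext_fin2 ?_ ?_⟩ <;>
            simp only [mulVecLin_fin2, Matrix.cons_val_zero, Matrix.cons_val_one, Matrix.head_cons,
              Pi.smul_apply, smul_eq_mul]
          · ring
          · linear_combination H2
        · push_neg at hb
          by_cases hd : A 1 1 ≠ 0
          · refine ⟨A 1 1, hd, ![0, x 1], funext_fin2 ?_ ?_⟩ <;>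
              simp only [mulVecLin_fin2, Matrix.cons_val_zero, Matrix.cons_val_one,
                Matrix.head_cons, Pi.smul_apply, smul_eq_mul]
            · linear_combination -H2
            · ring
          · push_neg at hd
            -- A = 0, so the kernel is everything and x = 0
            have hker : ∀ k : Fin 2 → ℤ, k ∈ LinearMap.ker A.mulVecLin := by
              intro k
              rw [LinearMap.mem_ker]
              refine funext_fin2 ?_ ?_ <;>
                simp only [mulVecLin_fin2, Pi.zero_apply, ha, hb, hc, hd] <;> ring
            have H3 := hx _ (hker ![1, 0])
            have H4 := hx _ (hker ![0, 1])
            simp only [omegaZ, Matrix.cons_val_zero, Matrix.cons_val_one, Matrix.head_cons,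
              mul_zero, mul_one, zero_sub, sub_zero, neg_eq_zero] at H3 H4
            have hx0 : x = 0 := funext_fin2 (by simpa using H4) (by simpa using H3)
            exact ⟨1, one_ne_zero, by rw [hx0, smul_zero]; exact Submodule.zero_mem _⟩

theorem range_le_Kperp_and_quot_iso_torsion (P : Matrix.SpecialLinearGroup (Fin 2) ℤ) :
    LinearMap.range
        (Matrix.mulVecLin
          ((1 : Matrix (Fin 2) (Fin 2) ℤ) - (P : Matrix (Fin 2) (Fin 2) ℤ))) ≤
      Kperp (Matrix.mulVecLin
          ((1 : Matrix (Fin 2) (Fin 2) ℤ) - (P : Matrix (Fin 2) (Fin 2) ℤ))) ∧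
    Finite
      (Kperp (Matrix.mulVecLin
            ((1 : Matrix (Fin 2) (Fin 2) ℤ) - (P : Matrix (Fin 2) (Fin 2) ℤ))) ⧸
        (LinearMap.range
              (Matrix.mulVecLin
                ((1 : Matrix (Fin 2) (Fin 2) ℤ) - (P : Matrix (Fin 2) (Fin 2) ℤ)))).comap
          (Kperp (Matrix.mulVecLin
                ((1 : Matrix (Fin 2) (Fin 2) ℤ) -
                  (P : Matrix (Fin 2) (Fin 2) ℤ)))).subtype) ∧
    Nonempty
      ((Kperp (Matrix.mulVecLin
              ((1 : Matrix (Fin 2) (Fin 2) ℤ) - (P : Matrix (Fin 2) (Fin 2) ℤ))) ⧸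
          (LinearMap.range
                (Matrix.mulVecLin
                  ((1 : Matrix (Fin 2) (Fin 2) ℤ) - (P : Matrix (Fin 2) (Fin 2) ℤ)))).comap
            (Kperp (Matrix.mulVecLin
                  ((1 : Matrix (Fin 2) (Fin 2) ℤ) -
                    (P : Matrix (Fin 2) (Fin 2) ℤ)))).subtype) ≃ₗ[ℤ]
        Submodule.torsion ℤ
          ((Fin 2 → ℤ) ⧸
            LinearMap.range
              (Matrix.mulVecLin
                ((1 : Matrix (Fin 2) (Fin 2) ℤ) - (P : Matrix (Fin 2) (Fin 2) ℤ))))) := by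
  set A := (1 : Matrix (Fin 2) (Fin 2) ℤ) - (P : Matrix (Fin 2) (Fin 2) ℤ) with hA
  set φ := A.mulVecLin with hφ
  have part1 : LinearMap.range φ ≤ Kperp φ := range_le_Kperp_aux P
  have hrel : A 0 0 + A 1 1 = A 0 0 * A 1 1 - A 0 1 * A 1 0 := by
    have hdet : (P : Matrix (Fin 2) (Fin 2) ℤ) 0 0 * (P : Matrix (Fin 2) (Fin 2) ℤ) 1 1
        - (P : Matrix (Fin 2) (Fin 2) ℤ) 0 1 * (P : Matrix (Fin 2) (Fin 2) ℤ) 1 0 = 1 := by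
      have := P.2
      rwa [Matrix.det_fin_two] at this
    have hA00 : A 0 0 = 1 - (P : Matrix (Fin 2) (Fin 2) ℤ) 0 0 := by simp [hA, Matrix.one_apply]
    have hA01 : A 0 1 = -(P : Matrix (Fin 2) (Fin 2) ℤ) 0 1 := by simp [hA, Matrix.one_apply]
    have hA10 : A 1 0 = -(P : Matrix (Fin 2) (Fin 2) ℤ) 1 0 := by simp [hA, Matrix.one_apply]
    have hA11 : A 1 1 = 1 - (P : Matrix (Fin 2) (Fin 2) ℤ) 1 1 := by simp [hA, Matrix.one_apply]
    rw [hA00, hA01, hA10, hA11]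
    linear_combination -hdet
  have sat : ∀ x ∈ Kperp φ, ∃ n : ℤ, n ≠ 0 ∧ n • x ∈ LinearMap.range φ :=
    fun x hx => sat_aux A hrel x hx
  have htor : ∀ x : Kperp φ,
      ((LinearMap.range φ).mkQ ∘ₗ (Kperp φ).subtype) x
        ∈ Submodule.torsion ℤ ((Fin 2 → ℤ) ⧸ LinearMap.range φ) := by
    intro ⟨x, hx⟩
    obtain ⟨n, hn, hmem⟩ := sat x hx
    rw [Submodule.mem_torsion_iff]
    refine ⟨⟨n, mem_nonZeroDivisors_of_ne_zero hn⟩, ?_⟩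
    simp only [LinearMap.comp_apply, Submodule.subtype_apply, Submodule.mkQ_apply]
    rw [Submonoid.smul_def, ← Submodule.Quotient.mk_smul, Submodule.Quotient.mk_eq_zero]
    exact hmem
  set f : Kperp φ →ₗ[ℤ] Submodule.torsion ℤ ((Fin 2 → ℤ) ⧸ LinearMap.range φ) :=
    LinearMap.codRestrict _ ((LinearMap.range φ).mkQ ∘ₗ (Kperp φ).subtype) htor with hf
  have hsurj : Function.Surjective f := by
    rintro ⟨t, ht⟩
    obtain ⟨x, rfl⟩ := Submodule.mkQ_surjective (LinearMap.range φ) t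
    rw [Submodule.mem_torsion_iff] at ht
    obtain ⟨⟨n, hn⟩, hnt⟩ := ht
    have hn0 : n ≠ 0 := nonZeroDivisors.ne_zero hn
    have hmem : n • x ∈ LinearMap.range φ := by
      rw [← Submodule.Quotient.mk_eq_zero, Submodule.Quotient.mk_smul]
      exact hnt
    have hxK : x ∈ Kperp φ := by
      intro k hk
      have h1 := part1 hmem k hk
      simp only [omegaZ, Pi.smul_apply, smul_eq_mul] at h1
      have h2 : n * (x 0 * k 1 - x 1 * k 0) = 0 := by linear_combination h1
      have h3 := mul_eq_zero.mp h2
      simp only [omegaZ]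
      tauto
    exact ⟨⟨x, hxK⟩, rfl⟩
  have hker : LinearMap.ker f
      = (LinearMap.range φ).comap (Kperp φ).subtype := by
    ext ⟨x, hx⟩
    simp only [LinearMap.mem_ker, Submodule.mem_comap, Submodule.subtype_apply, hf]
    constructor
    · intro h
      have := congrArg Subtype.val h
      simp only [LinearMap.codRestrict_apply, LinearMap.comp_apply, Submodule.subtype_apply,
        Submodule.mkQ_apply, ZeroMemClass.coe_zero] at this
      rwa [Submodule.Quotient.mk_eq_zero] at this
    · intro h
      apply Subtype.ext
      simp only [LinearMap.codRestrict_apply, LinearMap.comp_apply, Submodule.subtype_apply,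
        Submodule.mkQ_apply, ZeroMemClass.coe_zero]
      rwa [Submodule.Quotient.mk_eq_zero]
  have e : (Kperp φ ⧸ (LinearMap.range φ).comap (Kperp φ).subtype)
      ≃ₗ[ℤ] Submodule.torsion ℤ ((Fin 2 → ℤ) ⧸ LinearMap.range φ) :=
    (Submodule.quotEquivOfEq _ _ hker.symm).trans (f.quotKerEquivOfSurjective hsurj)
  have hfin : Finite (Submodule.torsion ℤ ((Fin 2 → ℤ) ⧸ LinearMap.range φ)) :=
    Module.finite_of_fg_torsion _ Submodule.torsion_isTorsion
  exact ⟨part1, Finite.of_equiv _ e.symm.toEquiv, ⟨e⟩⟩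
end
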